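/- arXiv:2410.04083 — 2 statements merged into one kernel-verified Lean document; each statement's English description precedes it below -/
import Mathlib

section
/- Let μ > 0, L₂ > 0, let f : E → ℝ be μ-strongly star-convex with respect to a global minimizer x* and have L₂-Lipschitz-continuous second derivative, let M₂ ≥ L₂, let x₀ ∈ E, and let D > 0 satisfy ‖x − x*‖ ≤ D whenever f(x) ≤ f(x₀). Let (x_t) be generated by Cubic Regularized Newton steps: for each t, x_{t+1} is a global minimizer of the cubic model Ω_{x_t,M₂}. Then for all t ≥ 0, f(x_t) − f(x*) ≤ (1 − α^{low})^t · (f(x₀) − f(x*)), where α^{low} = min{ 1/2, √(3μ/(4(M₂+L₂)D)) }. -/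
open scoped RealInnerProductSpace

section
variable {E : Type*} [NormedAddCommGroup E] [InnerProductSpace ℝ E]

/-- `f` is `μ`-uniformly star-convex of degree `q` with respect to `xs`. -/
def UniformlyStarConvex (f : E → ℝ) (xs : E) (q : ℕ) (μ : ℝ) : Prop :=
  ∀ x : E, ∀ α : ℝ, 0 ≤ α → α ≤ 1 →
    f (α • x + (1 - α) • xs) ≤
      α * f x + (1 - α) * f xs - α * (1 - α) * μ / q * ‖x - xs‖ ^ q

/-- `f` has `L`-Lipschitz-continuous `p`-th derivative. -/
def HasLipschitzDeriv (f : E → ℝ) (p : ℕ) (L : ℝ) : Prop :=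
  ContDiff ℝ p f ∧
    ∀ x y : E, ‖iteratedFDeriv ℝ p f x - iteratedFDeriv ℝ p f y‖ ≤ L * ‖x - y‖

/-- The `p`-th order Taylor polynomial `Φ_{x,p}(y)` of `f` at `x`. -/
noncomputable def taylorPoly (f : E → ℝ) (p : ℕ) (x y : E) : ℝ :=
  f x + ∑ k ∈ Finset.Icc 1 p,
    (1 / (Nat.factorial k : ℝ)) * iteratedFDeriv ℝ k f x (fun _ => y - x)

/-- The tensor model `Ω_{x,M}(y)`. -/
noncomputable def tensorModel (f : E → ℝ) (p : ℕ) (M : ℝ) (x y : E) : ℝ :=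
  taylorPoly f p x y + M / (Nat.factorial (p + 1) : ℝ) * ‖y - x‖ ^ (p + 1)

/-- `xp` is a basic `p`-th order tensor step from `x` with parameter `M`
(a global minimizer of the model). -/
def IsTensorStep (f : E → ℝ) (p : ℕ) (M : ℝ) (x xp : E) : Prop :=
  ∀ y : E, tensorModel f p M x xp ≤ tensorModel f p M x y

end

/-!
Compare the cubic model at the step from `x` with its value at `(1 - α) • x + α • xs`. By Taylor's
theorem with Lipschitz Hessian the model lies above `f` and overestimates it there by at most
`(M + L) α³ ‖x - xs‖³ / 6`, while strong star convexity gains `α (1 - α) μ ‖x - xs‖² / 2`. The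
iterates decrease `f`, so they stay in the level set where `‖x - xs‖ ≤ D`, and the choice of `α`
makes the gain dominate: the gap `f x - f xs` contracts by `1 - α` at every step.
-/

section Calculus

theorem norm_le_mul_pow_div_of_norm_deriv_le {F : Type*} [NormedAddCommGroup F] [NormedSpace ℝ F]
    {g g' : ℝ → F} {K : ℝ} (n : ℕ) (hg : ∀ t, HasDerivAt g (g' t) t) (h0 : g 0 = 0)
    (hbound : ∀ t, 0 ≤ t → ‖g' t‖ ≤ K * t ^ n) :
    ∀ t, 0 ≤ t → ‖g t‖ ≤ K * t ^ (n + 1) / (n + 1) := by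
  intro t ht
  have hB : ∀ s, HasDerivAt (fun s : ℝ => K * s ^ (n + 1) / (n + 1)) (K * s ^ n) s := by
    intro s
    refine (((hasDerivAt_pow (n + 1) s).const_mul K).div_const ((n : ℝ) + 1)).congr_deriv ?_
    push_cast
    field_simp
  refine image_norm_le_of_norm_deriv_right_le_deriv_boundary
    (fun s _ => (hg s).continuousAt.continuousWithinAt) (fun s _ => (hg s).hasDerivWithinAt)
    (by simp [h0]) hB (fun s hs => hbound s hs.1) ⟨ht, le_rfl⟩

variable {E F : Type*} [NormedAddCommGroup E] [NormedSpace ℝ E]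
  [NormedAddCommGroup F] [NormedSpace ℝ F]

theorem HasFDerivAt.hasDerivAt_comp_add_smul {g : E → F} {g' : E →L[ℝ] F} {x h : E} {t : ℝ}
    (hg : HasFDerivAt g g' (x + t • h)) : HasDerivAt (fun s : ℝ => g (x + s • h)) (g' h) t := by
  have hline : HasDerivAt (fun s : ℝ => x + s • h) h t := by
    simpa using ((hasDerivAt_id t).smul_const h).const_add x
  exact hg.comp_hasDerivAt t hline

end Calculus

section TensorModel

variable {E : Type*} [NormedAddCommGroup E] [InnerProductSpace ℝ E] {f : E → ℝ} {L M : ℝ}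

theorem taylorPoly_two (f : E → ℝ) (x y : E) :
    taylorPoly f 2 x y =
      f x + fderiv ℝ f x (y - x) + 1 / 2 * fderiv ℝ (fderiv ℝ f) x (y - x) (y - x) := by
  rw [taylorPoly, show Finset.Icc 1 2 = {1, 2} by decide, Finset.sum_pair (by norm_num),
    iteratedFDeriv_one_apply, iteratedFDeriv_two_apply]
  norm_num [Nat.factorial]
  ring

theorem tensorModel_two (f : E → ℝ) (M : ℝ) (x y : E) :
    tensorModel f 2 M x y = taylorPoly f 2 x y + M / 6 * ‖y - x‖ ^ 3 := by
  norm_num [tensorModel, Nat.factorial]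

theorem tensorModel_self (f : E → ℝ) (M : ℝ) (x : E) : tensorModel f 2 M x x = f x := by
  simp [tensorModel_two, taylorPoly_two]

namespace HasLipschitzDeriv

theorem abs_fderiv_fderiv_sub_le (hf : HasLipschitzDeriv f 2 L) (a b h : E) :
    |fderiv ℝ (fderiv ℝ f) a h h - fderiv ℝ (fderiv ℝ f) b h h| ≤ L * ‖a - b‖ * ‖h‖ ^ 2 := by
  have happ : fderiv ℝ (fderiv ℝ f) a h h - fderiv ℝ (fderiv ℝ f) b h h =
      (iteratedFDeriv ℝ 2 f a - iteratedFDeriv ℝ 2 f b) (fun _ => h) := by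
    simp [iteratedFDeriv_two_apply]
  calc _ ≤ ‖iteratedFDeriv ℝ 2 f a - iteratedFDeriv ℝ 2 f b‖ * ∏ _i : Fin 2, ‖h‖ := by
        rw [happ, ← Real.norm_eq_abs]; exact ContinuousMultilinearMap.le_opNorm _ _
    _ ≤ L * ‖a - b‖ * ‖h‖ ^ 2 := by
        rw [Finset.prod_const, Finset.card_univ, Fintype.card_fin]
        gcongr
        exact hf.2 a b

theorem abs_sub_taylorPoly_le (hf : HasLipschitzDeriv f 2 L) (x y : E) :
    |f y - taylorPoly f 2 x y| ≤ L / 6 * ‖y - x‖ ^ 3 := by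
  -- integrate the Lipschitz bound on the second derivative twice along `t ↦ x + t • (y - x)`
  set h := y - x
  have hdf : Differentiable ℝ f := hf.1.differentiable (by norm_num)
  have hddf : Differentiable ℝ (fderiv ℝ f) :=
    (hf.1.fderiv_right (m := 1) (by norm_num)).differentiable (by norm_num)
  set ψ : ℝ → ℝ := fun t => fderiv ℝ f (x + t • h) h
  set χ : ℝ → ℝ := fun t => fderiv ℝ (fderiv ℝ f) (x + t • h) h h
  have hφ : ∀ t, HasDerivAt (fun t : ℝ => f (x + t • h)) (ψ t) t := fun t =>
    (hdf _).hasFDerivAt.hasDerivAt_comp_add_smul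
  have hψ : ∀ t, HasDerivAt ψ (χ t) t := fun t => by
    simpa using (hddf _).hasFDerivAt.hasDerivAt_comp_add_smul.clm_apply (hasDerivAt_const t h)
  have hχ : ∀ t, 0 ≤ t → ‖χ t - χ 0‖ ≤ L * ‖h‖ ^ 3 * t ^ 1 := fun t ht => by
    have := hf.abs_fderiv_fderiv_sub_le (x + t • h) (x + (0 : ℝ) • h) h
    rw [add_sub_add_left_eq_sub, ← sub_smul, norm_smul, sub_zero, Real.norm_of_nonneg ht] at this
    rw [Real.norm_eq_abs]
    linarith
  have hG := norm_le_mul_pow_div_of_norm_deriv_le 1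
    (g := fun t => ψ t - ψ 0 - t * χ 0) (g' := fun t => χ t - χ 0) (fun t =>
      (((hψ t).sub_const (ψ 0)).sub ((hasDerivAt_id t).mul_const (χ 0))).congr_deriv (by ring))
    (by simp) hχ
  have hF := norm_le_mul_pow_div_of_norm_deriv_le 2
    (g := fun t => f (x + t • h) - f x - t * ψ 0 - t ^ 2 / 2 * χ 0)
    (g' := fun t => ψ t - ψ 0 - t * χ 0) (K := L * ‖h‖ ^ 3 / 2) (fun t =>
      ((((hφ t).sub_const (f x)).sub ((hasDerivAt_id t).mul_const (ψ 0))).sub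
        (((hasDerivAt_pow 2 t).div_const 2).mul_const (χ 0))).congr_deriv (by simp))
    (by simp) (fun t ht => (hG t ht).trans_eq (by push_cast; ring)) 1 zero_le_one
  rw [taylorPoly_two]
  convert hF using 1
  · simp [h, ψ, χ, Real.norm_eq_abs]; ring_nf
  · norm_num; ring

theorem le_tensorModel (hf : HasLipschitzDeriv f 2 L) (hLM : L ≤ M) (x y : E) :
    f y ≤ tensorModel f 2 M x y := by
  have := (abs_le.1 (hf.abs_sub_taylorPoly_le x y)).2
  calc f y ≤ taylorPoly f 2 x y + L / 6 * ‖y - x‖ ^ 3 := by linarith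
    _ ≤ taylorPoly f 2 x y + M / 6 * ‖y - x‖ ^ 3 := by gcongr
    _ = tensorModel f 2 M x y := (tensorModel_two f M x y).symm

theorem tensorModel_le (hf : HasLipschitzDeriv f 2 L) (M : ℝ) (x y : E) :
    tensorModel f 2 M x y ≤ f y + (M + L) / 6 * ‖y - x‖ ^ 3 := by
  have := (abs_le.1 (hf.abs_sub_taylorPoly_le x y)).1
  rw [tensorModel_two]
  linarith

end HasLipschitzDeriv

namespace IsTensorStep

variable {x xp : E}

theorem apply_le (h : IsTensorStep f 2 M x xp) (hf : HasLipschitzDeriv f 2 L) (hLM : L ≤ M) :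
    f xp ≤ f x :=
  calc f xp ≤ tensorModel f 2 M x xp := hf.le_tensorModel hLM x xp
    _ ≤ tensorModel f 2 M x x := h x
    _ = f x := tensorModel_self f M x

theorem sub_le_mul_sub (h : IsTensorStep f 2 M x xp) (hf : HasLipschitzDeriv f 2 L)
    (hLM : L ≤ M) {xs : E} {μ α : ℝ} (hsc : UniformlyStarConvex f xs 2 μ) (hα0 : 0 ≤ α)
    (hα1 : α ≤ 1) (hα : (M + L) * α ^ 2 * ‖x - xs‖ ≤ 3 * (1 - α) * μ) :
    f xp - f xs ≤ (1 - α) * (f x - f xs) := by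
  set r := ‖x - xs‖
  set y := (1 - α) • x + α • xs
  have hfy : f y ≤ (1 - α) * f x + α * f xs - (1 - α) * α * μ / 2 * r ^ 2 := by
    have := hsc x (1 - α) (by linarith) (by linarith)
    rw [sub_sub_cancel] at this
    exact_mod_cast this
  have hyx : ‖y - x‖ = α * r := by
    rw [show y - x = α • (xs - x) by module, norm_smul, Real.norm_of_nonneg hα0, norm_sub_rev]
  have hgain : (M + L) / 6 * (α * r) ^ 3 ≤ (1 - α) * α * μ / 2 * r ^ 2 := by
    have := mul_le_mul_of_nonneg_left hα (by positivity : 0 ≤ α * r ^ 2 / 6)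
    linarith
  have hmodel := hf.tensorModel_le M x y
  rw [hyx] at hmodel
  linarith [hf.le_tensorModel hLM x xp, h y]

end IsTensorStep

end TensorModel

theorem cubic_newton_linear_rate_general {E : Type*} [NormedAddCommGroup E]
    [InnerProductSpace ℝ E]
    (f : E → ℝ) (xs : E) (μ L M D : ℝ)
    (hμ : 0 < μ) (hL : 0 < L) (hM : L ≤ M) (hD : 0 < D)
    (hsc : UniformlyStarConvex f xs 2 μ)
    (hf : HasLipschitzDeriv f 2 L)
    (x : ℕ → E)
    (hlev : ∀ z : E, f z ≤ f (x 0) → ‖z - xs‖ ≤ D)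
    (hstep : ∀ t : ℕ, IsTensorStep f 2 M (x t) (x (t + 1))) :
    ∀ t : ℕ, f (x t) - f xs ≤
      (1 - min (1 / 2) (Real.sqrt (3 * μ / (4 * (M + L) * D)))) ^ t * (f (x 0) - f xs) := by
  set α := min (1 / 2) (Real.sqrt (3 * μ / (4 * (M + L) * D)))
  have hML : 0 < M + L := by linarith
  have hα0 : 0 ≤ α := le_min (by norm_num) (Real.sqrt_nonneg _)
  have hα_half : α ≤ 1 / 2 := min_le_left _ _
  have hαD : (M + L) * α ^ 2 * D ≤ 3 * μ / 4 := by
    have := (Real.le_sqrt hα0 (by positivity)).1 (min_le_right _ _)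
    rw [le_div_iff₀ (by positivity)] at this
    linarith
  have hlevel : ∀ t, f (x t) ≤ f (x 0) := fun t =>
    antitone_nat_of_succ_le (f := f ∘ x) (fun t => (hstep t).apply_le hf hM) (Nat.zero_le t)
  intro t
  refine le_geom (u := fun t => f (x t) - f xs) (by linarith) t fun k _ => ?_
  refine (hstep k).sub_le_mul_sub hf hM hsc hα0 (by linarith) ?_
  calc (M + L) * α ^ 2 * ‖x k - xs‖ ≤ (M + L) * α ^ 2 * D := by gcongr; exact hlev _ (hlevel k)
    _ ≤ 3 * (1 - α) * μ := by nlinarith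

theorem cubic_newton_linear_rate {E : Type*} [NormedAddCommGroup E]
    [InnerProductSpace ℝ E] [FiniteDimensional ℝ E]
    (f : E → ℝ) (xs : E) (μ L M D : ℝ)
    (hμ : 0 < μ) (hL : 0 < L) (hM : L ≤ M) (hD : 0 < D)
    (hmin : ∀ y : E, f xs ≤ f y)
    (hsc : UniformlyStarConvex f xs 2 μ)
    (hf : HasLipschitzDeriv f 2 L)
    (x : ℕ → E)
    (hlev : ∀ z : E, f z ≤ f (x 0) → ‖z - xs‖ ≤ D)
    (hstep : ∀ t : ℕ, IsTensorStep f 2 M (x t) (x (t + 1))) :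
    ∀ t : ℕ, f (x t) - f xs ≤
      (1 - min (1 / 2) (Real.sqrt (3 * μ / (4 * (M + L) * D)))) ^ t * (f (x 0) - f xs) :=
  cubic_newton_linear_rate_general f xs μ L M D hμ hL hM hD hsc hf x hlev hstep
end

section
/- Let p ≥ q ≥ 2 be integers, μ_q > 0, L_p > 0, let f : E → ℝ be μ_q-uniformly star-convex of degree q with respect to a global minimizer x* and have L_p-Lipschitz-continuous p-th derivative, let M_p ≥ (p−1)·L_p, let x₀ ∈ E, and let D > 0 satisfy ‖x − x*‖ ≤ D whenever f(x) ≤ f(x₀). Let (x_t) be generated by basic p-th order tensor steps: for each t, x_{t+1} is a global minimizer of Ω_{x_t,M_p}. Then for all t ≥ 0, f(x_t) − f(x*) ≤ (1 − α^{low}_p)^t · (f(x₀) − f(x*)), where α^{low}_p = min{ 1/2, (1/2)·((p+1)!·μ_q/(q(M_p+L_p)D^{p−q+1}))^{1/p} }. -/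
open scoped RealInnerProductSpace

/-!
With a Lipschitz `p`-th derivative, the integral form of Taylor's remainder gives
`|f y - Φ_{x,p}(y)| ≤ L/(p+1)! ‖y - x‖^{p+1}`; since `M ≥ L`, a tensor step `x⁺` from `x` then
satisfies `f x⁺ ≤ f y + (M+L)/(p+1)! ‖y - x‖^{p+1}` for every `y`. In particular `f` decreases
along the iterates, which therefore stay in the initial level set, at distance `≤ D` from `x*`.
Testing with `y = (1-α) x + α x*`, uniform star-convexity yields the gain
`α(1-α) μ/q ‖x - x*‖^q`, which absorbs the penalty `(M+L)/(p+1)! α^{p+1} ‖x - x*‖^{p+1}` as soon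
as `α^p ≤ (p+1)! μ / (2q(M+L)D^{p-q+1})`. This gives the contraction
`f x⁺ - f* ≤ (1-α)(f x - f*)`.
-/

open scoped Nat

theorem integral_one_sub_pow (m : ℕ) : ∫ t in (0 : ℝ)..1, (1 - t) ^ m = 1 / (m + 1) := by
  simp [intervalIntegral.integral_comp_sub_left (fun t : ℝ => t ^ m) 1, integral_pow]

theorem integral_one_sub_pow_mul (m : ℕ) :
    ∫ t in (0 : ℝ)..1, (1 - t) ^ m * t = 1 / ((m + 1) * (m + 2)) := by
  have hsplit : ∀ t : ℝ, (1 - t) ^ m * t = (1 - t) ^ m - (1 - t) ^ (m + 1) := fun t => by ring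
  simp only [hsplit]
  rw [intervalIntegral.integral_sub ((by fun_prop : Continuous _).intervalIntegrable _ _)
    ((by fun_prop : Continuous _).intervalIntegrable _ _), integral_one_sub_pow,
    integral_one_sub_pow]
  push_cast
  field_simp
  ring

section
variable {E : Type*} [NormedAddCommGroup E] [InnerProductSpace ℝ E] {f : E → ℝ} {p : ℕ} {L : ℝ}

theorem taylorPoly_eq_sum_range (f : E → ℝ) (p : ℕ) (x y : E) :
    taylorPoly f p x y =
      ∑ k ∈ Finset.range (p + 1), (k ! : ℝ)⁻¹ * iteratedFDeriv ℝ k f x (fun _ => y - x) := by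
  rw [taylorPoly, ← Finset.Ico_add_one_right_eq_Icc, Finset.range_eq_Ico,
    Finset.sum_eq_sum_Ico_succ_bot (Nat.succ_pos p)]
  simp

theorem HasLipschitzDeriv.abs_iteratedFDeriv_line_sub_le (hf : HasLipschitzDeriv f p L)
    (x v : E) (t : ℝ) :
    |iteratedFDeriv ℝ p f (x + t • v) (fun _ => v) - iteratedFDeriv ℝ p f x (fun _ => v)| ≤
      L * |t| * ‖v‖ ^ (p + 1) := by
  rw [← sub_apply]
  calc _ ≤ ‖iteratedFDeriv ℝ p f (x + t • v) - iteratedFDeriv ℝ p f x‖ * ∏ _ : Fin p, ‖v‖ :=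
        ContinuousMultilinearMap.le_opNorm _ _
    _ ≤ L * ‖(x + t • v) - x‖ * ‖v‖ ^ p := by
        rw [Finset.prod_const, Finset.card_univ, Fintype.card_fin]
        gcongr
        exact hf.2 _ _
    _ = L * |t| * ‖v‖ ^ (p + 1) := by
        rw [add_sub_cancel_left, norm_smul, Real.norm_eq_abs]
        ring

theorem HasLipschitzDeriv.abs_sub_taylorPoly_le_s8 (hf : HasLipschitzDeriv f p L) (hp : 1 ≤ p)
    (x y : E) : |f y - taylorPoly f p x y| ≤ L / (p + 1)! * ‖y - x‖ ^ (p + 1) := by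
  obtain ⟨m, rfl⟩ : ∃ m, p = m + 1 := ⟨p - 1, by omega⟩
  set v := y - x
  set D : ℝ → ℝ := fun t => iteratedFDeriv ℝ (m + 1) f (x + t • v) (fun _ => v)
  have hD : Continuous D :=
    ((hf.1.continuous_iteratedFDeriv le_rfl).comp (by fun_prop)).eval_const _
  have hremainder : f y - taylorPoly f (m + 1) x y =
      (m ! : ℝ)⁻¹ * ∫ t in (0 : ℝ)..1, (1 - t) ^ m * (D t - D 0) := by
    have htaylor := map_add_eq_sum_add_integral_iteratedFDeriv (n := m) (x := x) (y := v)
      fun t _ => hf.1.contDiffAt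
    rw [add_sub_cancel] at htaylor
    simp only [mul_sub]
    rw [taylorPoly_eq_sum_range, Finset.sum_range_succ, htaylor,
      intervalIntegral.integral_sub ((by fun_prop : Continuous _).intervalIntegrable _ _)
        ((by fun_prop : Continuous _).intervalIntegrable _ _),
      intervalIntegral.integral_mul_const, integral_one_sub_pow]
    simp only [smul_eq_mul, Nat.factorial_succ, D, zero_smul, add_zero]
    push_cast
    field_simp
    ring
  have hbound : ∀ t ∈ Set.Ioc (0 : ℝ) 1,
      ‖(1 - t) ^ m * (D t - D 0)‖ ≤ (1 - t) ^ m * t * (L * ‖v‖ ^ (m + 2)) := by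
    rintro t ⟨ht₀, ht₁⟩
    have hlip : |D t - D 0| ≤ L * t * ‖v‖ ^ (m + 2) := by
      simpa [D, abs_of_pos ht₀] using hf.abs_iteratedFDeriv_line_sub_le x v t
    have h1t : 0 ≤ 1 - t := sub_nonneg.2 ht₁
    rw [Real.norm_eq_abs, abs_mul, abs_of_nonneg (pow_nonneg h1t m)]
    calc _ ≤ (1 - t) ^ m * (L * t * ‖v‖ ^ (m + 2)) := by gcongr
      _ = _ := by ring
  have hint := intervalIntegral.norm_integral_le_of_norm_le (μ := MeasureTheory.volume)
    zero_le_one (Filter.Eventually.of_forall hbound)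
    ((by fun_prop : Continuous _).intervalIntegrable _ _)
  rw [intervalIntegral.integral_mul_const, integral_one_sub_pow_mul] at hint
  rw [hremainder, abs_mul, abs_inv, Nat.abs_cast]
  calc _ ≤ (m ! : ℝ)⁻¹ * (1 / ((m + 1) * (m + 2)) * (L * ‖v‖ ^ (m + 2))) := by
        gcongr
        exact hint
    _ = _ := by
      simp only [Nat.factorial_succ]
      push_cast
      field_simp
      ring

end

section
variable {E : Type*} [NormedAddCommGroup E] [InnerProductSpace ℝ E] {f : E → ℝ} {p : ℕ}
  {L M : ℝ}

theorem IsTensorStep.le_add_norm_pow {x xp : E} (hstep : IsTensorStep f p M x xp)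
    (hf : HasLipschitzDeriv f p L) (hp : 1 ≤ p) (hLM : L ≤ M) (y : E) :
    f xp ≤ f y + (M + L) / (p + 1)! * ‖y - x‖ ^ (p + 1) := by
  have hxp := (abs_le.1 (hf.abs_sub_taylorPoly_le_s8 hp x xp)).2
  have hy := (abs_le.1 (hf.abs_sub_taylorPoly_le_s8 hp x y)).1
  have hmodel := hstep y
  have hLM' : L / (p + 1)! * ‖xp - x‖ ^ (p + 1) ≤ M / (p + 1)! * ‖xp - x‖ ^ (p + 1) := by
    gcongr
  simp only [tensorModel] at hmodel
  rw [add_div, add_mul]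
  linarith

theorem UniformlyStarConvex.sub_le_of_le_add_norm_pow {xs x xp : E} {q n : ℕ} {μ C α : ℝ}
    (hsc : UniformlyStarConvex f xs q μ) (hxp : ∀ y, f xp ≤ f y + C * ‖y - x‖ ^ (n + 1))
    (hqn : q ≤ n) (hα₀ : 0 ≤ α) (hα₁ : α ≤ 1)
    (hC : C * α ^ n * ‖x - xs‖ ^ (n - q + 1) ≤ (1 - α) * (μ / q)) :
    f xp - f xs ≤ (1 - α) * (f x - f xs) := by
  have hconv := hsc x (1 - α) (by linarith) (by linarith)
  have hstep := hxp ((1 - α) • x + α • xs)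
  rw [sub_sub_cancel] at hconv
  set r := ‖x - xs‖
  have hdist : ‖((1 - α) • x + α • xs) - x‖ = α * r := by
    rw [show ((1 - α) • x + α • xs) - x = α • (xs - x) by module, norm_smul,
      Real.norm_of_nonneg hα₀, norm_sub_rev]
  have hpow : C * (α * r) ^ (n + 1) = C * α ^ n * r ^ (n - q + 1) * (α * r ^ q) := by
    have hr : r ^ (n + 1) = r ^ (n - q + 1) * r ^ q := by
      rw [← pow_add]
      congr 1
      omega
    rw [mul_pow, hr, pow_succ]
    ring
  have hpen : C * (α * r) ^ (n + 1) ≤ (1 - α) * (μ / q) * (α * r ^ q) := by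
    rw [hpow]
    gcongr
  rw [hdist] at hstep
  have hgain : (1 - α) * α * μ / q * r ^ q = (1 - α) * (μ / q) * (α * r ^ q) := by ring
  linarith

end

theorem pow_min_half_mul_rpow_le {A : ℝ} {p : ℕ} (hA : 0 ≤ A) (hp : p ≠ 0) :
    min (1 / 2) ((1 / 2) * A ^ ((1 : ℝ) / p)) ^ p ≤ 1 / 2 * A := by
  have hroot : (A ^ ((1 : ℝ) / p)) ^ p = A := by
    rw [← Real.rpow_natCast, ← Real.rpow_mul hA, one_div_mul_cancel (by exact_mod_cast hp),
      Real.rpow_one]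
  calc min (1 / 2) ((1 / 2) * A ^ ((1 : ℝ) / p)) ^ p
      ≤ ((1 / 2) * A ^ ((1 : ℝ) / p)) ^ p :=
        pow_le_pow_left₀ (le_min (by norm_num) (by positivity)) (min_le_right _ _) p
    _ = (1 / 2) ^ p * A := by rw [mul_pow, hroot]
    _ ≤ 1 / 2 * A := by
        gcongr
        exact pow_le_of_le_one (by norm_num) (by norm_num) hp

theorem mul_pow_mul_pow_le_one_sub_mul {K c D r α : ℝ} {n k : ℕ} (hK : 0 < K) (hc : 0 ≤ c)
    (hD : 0 < D) (hr₀ : 0 ≤ r) (hrD : r ≤ D) (hα : α ≤ 1 / 2)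
    (hαn : α ^ n ≤ 1 / 2 * (c / (K * D ^ k))) :
    K * α ^ n * r ^ k ≤ (1 - α) * c :=
  calc K * α ^ n * r ^ k ≤ K * (1 / 2 * (c / (K * D ^ k))) * D ^ k := by gcongr
    _ = 1 / 2 * c := by field_simp
    _ ≤ (1 - α) * c := by gcongr; linarith

theorem tensor_linear_rate_general {E : Type*} [NormedAddCommGroup E]
    [InnerProductSpace ℝ E]
    (f : E → ℝ) (xs : E) (p q : ℕ) (μ L M D : ℝ)
    (hq : 2 ≤ q) (hpq : q ≤ p) (hμ : 0 < μ) (hL : 0 < L)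
    (hM : ((p : ℝ) - 1) * L ≤ M) (hD : 0 < D)
    (hsc : UniformlyStarConvex f xs q μ)
    (hf : HasLipschitzDeriv f p L)
    (x : ℕ → E)
    (hlev : ∀ z : E, f z ≤ f (x 0) → ‖z - xs‖ ≤ D)
    (hstep : ∀ t : ℕ, IsTensorStep f p M (x t) (x (t + 1))) :
    ∀ t : ℕ, f (x t) - f xs ≤
      (1 - min (1 / 2) ((1 / 2) * (((Nat.factorial (p + 1) : ℝ) * μ) /
        ((q : ℝ) * (M + L) * D ^ (p - q + 1))) ^ ((1 : ℝ) / p))) ^ t *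
        (f (x 0) - f xs) := by
  have hp : (2 : ℝ) ≤ p := by exact_mod_cast hq.trans hpq
  have hLM : L ≤ M := (le_mul_of_one_le_left hL.le (by linarith)).trans hM
  set K : ℝ := (M + L) / (p + 1)!
  have hK : 0 < K := div_pos (by linarith) (by positivity)
  set A : ℝ := (p + 1)! * μ / (q * (M + L) * D ^ (p - q + 1))
  have hA : A = μ / q / (K * D ^ (p - q + 1)) := by
    simp only [A, K]
    field_simp
  have hA₀ : 0 ≤ A := hA ▸ div_nonneg (by positivity) (mul_pos hK (by positivity)).le
  set α := min (1 / 2) ((1 / 2) * A ^ ((1 : ℝ) / p))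
  have hα₀ : 0 ≤ α := le_min (by norm_num) (mul_nonneg (by norm_num) (Real.rpow_nonneg hA₀ _))
  have hα : α ≤ 1 / 2 := min_le_left _ _
  have hαp : α ^ p ≤ 1 / 2 * A := pow_min_half_mul_rpow_le hA₀ (by omega)
  rw [hA] at hαp
  have hdesc (t : ℕ) := (hstep t).le_add_norm_pow hf (by omega) hLM
  have hlevel (t : ℕ) : f (x t) ≤ f (x 0) :=
    antitone_nat_of_succ_le (f := fun t => f (x t)) (fun t => by simpa using hdesc t (x t))
      (Nat.zero_le t)
  have hcontract (t : ℕ) : f (x (t + 1)) - f xs ≤ (1 - α) * (f (x t) - f xs) :=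
    hsc.sub_le_of_le_add_norm_pow (hdesc t) hpq hα₀ (by linarith)
      (mul_pow_mul_pow_le_one_sub_mul hK (by positivity) hD (norm_nonneg _)
        (hlev _ (hlevel t)) hα hαp)
  exact fun t => le_geom (u := fun t => f (x t) - f xs) (by linarith) t
    fun k _ => hcontract k

theorem tensor_linear_rate {E : Type*} [NormedAddCommGroup E]
    [InnerProductSpace ℝ E] [FiniteDimensional ℝ E]
    (f : E → ℝ) (xs : E) (p q : ℕ) (μ L M D : ℝ)
    (hq : 2 ≤ q) (hpq : q ≤ p) (hμ : 0 < μ) (hL : 0 < L)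
    (hM : ((p : ℝ) - 1) * L ≤ M) (hD : 0 < D)
    (hmin : ∀ y : E, f xs ≤ f y)
    (hsc : UniformlyStarConvex f xs q μ)
    (hf : HasLipschitzDeriv f p L)
    (x : ℕ → E)
    (hlev : ∀ z : E, f z ≤ f (x 0) → ‖z - xs‖ ≤ D)
    (hstep : ∀ t : ℕ, IsTensorStep f p M (x t) (x (t + 1))) :
    ∀ t : ℕ, f (x t) - f xs ≤
      (1 - min (1 / 2) ((1 / 2) * (((Nat.factorial (p + 1) : ℝ) * μ) /
        ((q : ℝ) * (M + L) * D ^ (p - q + 1))) ^ ((1 : ℝ) / p))) ^ t *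
        (f (x 0) - f xs) :=
  tensor_linear_rate_general f xs p q μ L M D hq hpq hμ hL hM hD hsc hf x hlev hstep
end
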